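/- arXiv:1811.00603 — 2 statements merged into one kernel-verified Lean document; each statement's English description precedes it below -/
import Mathlib

section
/- Let X be a geodesic metric space and n ≥ 1. Then the finite subset space X(n) is 2-quasiconvex: for all nonempty subsets x, y of X each with at most n elements, there exists a path γ : [0,1] → X(n), i.e., each γ(t) is a nonempty subset of X with at most n elements, such that γ(0) = x, γ(1) = y, and d_H(γ(s), γ(t)) ≤ 2·|s − t|·d_H(x, y) for all s, t ∈ [0,1]. -/
/-!
Let `H = d_H(x, y)` and join `a ∈ x`, `b ∈ y` by an edge when `dist a b ≤ H`; these edges cover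
both `x` and `y`. A minimal edge cover is a star forest, so collapsing every star to its center
gives maps `μ` on `x` and `σ` on `y`, each moving points by at most `H` along an edge, with
`μ '' x = σ '' y`. The path slides `x` along geodesics onto `μ '' x` during `[0, 1/2]`, then
`σ '' y` onto `y` during `[1/2, 1]`; every set along the way is the image of `x` or of `y`, and
each half is `H`-Lipschitz in the time parameter, which doubles to `2H` after rescaling.
-/

open Metric TopologicalSpace

section EdgeCover

variable {α : Type*} {s t : Set α} {E : Set (α × α)}

/-- A pair `(a, b)` is an edge from the copy of `s` to the copy of `t` of a bipartite graph,
even where `s` and `t` meet; no vertex of either side is isolated. -/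
structure IsEdgeCover (s t : Set α) (E : Set (α × α)) : Prop where
  subset : E ⊆ s ×ˢ t
  left : ∀ a ∈ s, ∃ b, (a, b) ∈ E
  right : ∀ b ∈ t, ∃ a, (a, b) ∈ E

def IsStarForest (E : Set (α × α)) : Prop :=
  ∀ p ∈ E, (∀ b, (p.1, b) ∈ E → b = p.2) ∨ ∀ a, (a, p.2) ∈ E → a = p.1

theorem IsEdgeCover.exists_minimal_subset (hE : IsEdgeCover s t E) (hfin : E.Finite) :
    ∃ F ⊆ E, Minimal (IsEdgeCover s t) F := by
  have hfam : {G | G ⊆ E ∧ IsEdgeCover s t G}.Finite :=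
    hfin.finite_subsets.subset fun G hG => hG.1
  obtain ⟨F, hFE, hF⟩ := hfam.exists_le_minimal (a := E) ⟨subset_rfl, hE⟩
  exact ⟨F, hFE, hF.1.2, fun G hG hGF => hF.2 ⟨hGF.trans hFE, hG⟩ hGF⟩

theorem IsEdgeCover.erase {a b a' b' : α} (hE : IsEdgeCover s t E) (hb' : (a, b') ∈ E)
    (hbb' : b' ≠ b) (ha' : (a', b) ∈ E) (haa' : a' ≠ a) : IsEdgeCover s t (E \ {(a, b)}) where
  subset := Set.sdiff_subset.trans hE.subset
  left c hc := by
    obtain ⟨d, hd⟩ := hE.left c hc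
    by_cases h : (c, d) = (a, b)
    · obtain ⟨rfl, rfl⟩ := Prod.ext_iff.mp h
      exact ⟨b', hb', by simpa using hbb'⟩
    · exact ⟨d, hd, h⟩
  right d hd := by
    obtain ⟨c, hc⟩ := hE.right d hd
    by_cases h : (c, d) = (a, b)
    · obtain ⟨rfl, rfl⟩ := Prod.ext_iff.mp h
      exact ⟨a', ha', by simpa using haa'⟩
    · exact ⟨c, hc, h⟩

theorem Minimal.isStarForest (hE : Minimal (IsEdgeCover s t) E) : IsStarForest E := by
  rintro ⟨a, b⟩ hab
  by_contra! ⟨⟨b', hb', hbb'⟩, ⟨a', ha', haa'⟩⟩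
  have := hE.le_of_le (hE.1.erase hb' hbb' ha' haa') Set.sdiff_subset hab
  simp at this

theorem IsEdgeCover.exists_image_eq_image_of_center (hE : IsEdgeCover s t E) (c : α × α → α)
    (hc : ∀ p ∈ E, c p = p.1 ∨ c p = p.2)
    (hc₁ : ∀ p ∈ E, ∀ q ∈ E, p.1 = q.1 → c p = c q)
    (hc₂ : ∀ p ∈ E, ∀ q ∈ E, p.2 = q.2 → c p = c q) :
    ∃ μ σ : α → α, (∀ a ∈ s, μ a = a ∨ (a, μ a) ∈ E) ∧ (∀ b ∈ t, σ b = b ∨ (σ b, b) ∈ E) ∧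
      μ '' s = σ '' t := by
  classical
  choose! β hβ using hE.left
  choose! γ hγ using hE.right
  have hμ : (fun a => c (a, β a)) '' s = c '' E := by
    ext z
    constructor
    · rintro ⟨a, ha, rfl⟩
      exact ⟨_, hβ a ha, rfl⟩
    · rintro ⟨p, hp, rfl⟩
      have ha := (hE.subset hp).1
      exact ⟨p.1, ha, hc₁ _ (hβ _ ha) _ hp rfl⟩
  have hσ : (fun b => c (γ b, b)) '' t = c '' E := by
    ext z
    constructor
    · rintro ⟨b, hb, rfl⟩
      exact ⟨_, hγ b hb, rfl⟩
    · rintro ⟨p, hp, rfl⟩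
      have hb := (hE.subset hp).2
      exact ⟨p.2, hb, hc₂ _ (hγ _ hb) _ hp rfl⟩
  refine ⟨fun a => c (a, β a), fun b => c (γ b, b), fun a ha => ?_, fun b hb => ?_,
    hμ.trans hσ.symm⟩
  · rcases hc _ (hβ a ha) with h | h <;> simp [h, hβ a ha]
  · rcases hc _ (hγ b hb) with h | h <;> simp [h, hγ b hb]

/-- Collapse each star to its center: an edge goes to its right endpoint exactly when that
endpoint has degree at least two. -/
theorem IsStarForest.exists_image_eq_image (hF : IsStarForest E) (hE : IsEdgeCover s t E) :
    ∃ μ σ : α → α, (∀ a ∈ s, μ a = a ∨ (a, μ a) ∈ E) ∧ (∀ b ∈ t, σ b = b ∨ (σ b, b) ∈ E) ∧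
      μ '' s = σ '' t := by
  classical
  let c : α × α → α := fun p => if ∃ a ≠ p.1, (a, p.2) ∈ E then p.2 else p.1
  refine hE.exists_image_eq_image_of_center c (fun p _ => ?_) ?_ ?_
  · by_cases h : ∃ a ≠ p.1, (a, p.2) ∈ E <;> simp [c, h]
  · rintro ⟨a, b⟩ hp ⟨a', b'⟩ hq (rfl : a = a')
    by_cases hbb' : b = b'
    · rw [hbb']
    have center : ∀ {d d'}, (a, d) ∈ E → (a, d') ∈ E → d ≠ d' → c (a, d) = a := by
      intro d d' hd hd' hne
      have hleaf : ∀ a', (a', d) ∈ E → a' = a :=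
        (hF _ hd).resolve_left fun h => hne (h d' hd').symm
      exact if_neg fun ⟨a', ha', hmem⟩ => ha' (hleaf a' hmem)
    rw [center hp hq hbb', center hq hp (Ne.symm hbb')]
  · rintro ⟨a, b⟩ hp ⟨a', b'⟩ hq (rfl : b = b')
    by_cases haa' : a = a'
    · rw [haa']
    rw [show c (a, b) = b from if_pos ⟨a', Ne.symm haa', hq⟩,
      show c (a', b) = b from if_pos ⟨a, haa', hp⟩]

theorem IsEdgeCover.exists_image_eq_image (hE : IsEdgeCover s t E) (hfin : E.Finite) :
    ∃ μ σ : α → α, (∀ a ∈ s, μ a = a ∨ (a, μ a) ∈ E) ∧ (∀ b ∈ t, σ b = b ∨ (σ b, b) ∈ E) ∧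
      μ '' s = σ '' t := by
  obtain ⟨F, hFE, hF⟩ := hE.exists_minimal_subset hfin
  obtain ⟨μ, σ, hμ, hσ, himage⟩ := hF.isStarForest.exists_image_eq_image hF.1
  exact ⟨μ, σ, fun a ha => (hμ a ha).imp_right (@hFE _), fun b hb => (hσ b hb).imp_right (@hFE _),
    himage⟩

end EdgeCover

section Metric

variable {X : Type*}

theorem hausdorffDist_image_le_of_dist_le {α : Type*} [PseudoMetricSpace X] {s : Set α}
    {f g : α → X} {r : ℝ} (hr : 0 ≤ r) (h : ∀ a ∈ s, dist (f a) (g a) ≤ r) :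
    hausdorffDist (f '' s) (g '' s) ≤ r := by
  apply hausdorffDist_le_of_mem_dist hr
  · rintro _ ⟨a, ha, rfl⟩
    exact ⟨g a, Set.mem_image_of_mem _ ha, h a ha⟩
  · rintro _ ⟨a, ha, rfl⟩
    exact ⟨f a, Set.mem_image_of_mem _ ha, dist_comm (f a) (g a) ▸ h a ha⟩

theorem exists_dist_le_hausdorffDist [PseudoMetricSpace X] {s t : Set X} {a : X} (ha : a ∈ s)
    (ht : IsCompact t) (htne : t.Nonempty) (hfin : hausdorffEDist s t ≠ ⊤) :
    ∃ b ∈ t, dist a b ≤ hausdorffDist s t := by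
  obtain ⟨b, hb, hdist⟩ := ht.exists_infDist_eq_dist htne a
  exact ⟨b, hb, hdist ▸ infDist_le_hausdorffDist_of_mem ha hfin⟩

theorem isEdgeCover_dist_le_hausdorffDist [PseudoMetricSpace X] {s t : Set X}
    (hs : IsCompact s) (hsne : s.Nonempty) (ht : IsCompact t) (htne : t.Nonempty) :
    IsEdgeCover s t {p | p ∈ s ×ˢ t ∧ dist p.1 p.2 ≤ hausdorffDist s t} where
  subset _ hp := hp.1
  left a ha := by
    have hfin := hausdorffEDist_ne_top_of_nonempty_of_bounded hsne htne hs.isBounded ht.isBounded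
    obtain ⟨b, hb, hdist⟩ := exists_dist_le_hausdorffDist ha ht htne hfin
    exact ⟨b, ⟨ha, hb⟩, hdist⟩
  right b hb := by
    have hfin := hausdorffEDist_ne_top_of_nonempty_of_bounded htne hsne ht.isBounded hs.isBounded
    obtain ⟨a, ha, hdist⟩ := exists_dist_le_hausdorffDist hb hs hsne hfin
    exact ⟨a, ⟨ha, hb⟩, by rwa [dist_comm, hausdorffDist_comm]⟩

noncomputable def concatHalves {β : Type*} (f g : ℝ → β) (t : ℝ) : β :=
  if t ≤ 1 / 2 then f (2 * t) else g (2 * t - 1)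

theorem dist_concatHalves_le [PseudoMetricSpace X] {f g : ℝ → X} {L : ℝ}
    (hf : ∀ s ∈ Set.Icc (0 : ℝ) 1, ∀ t ∈ Set.Icc (0 : ℝ) 1, dist (f s) (f t) ≤ |s - t| * L)
    (hg : ∀ s ∈ Set.Icc (0 : ℝ) 1, ∀ t ∈ Set.Icc (0 : ℝ) 1, dist (g s) (g t) ≤ |s - t| * L)
    (hfg : f 1 = g 0) {s t : ℝ} (hs : s ∈ Set.Icc (0 : ℝ) 1) (ht : t ∈ Set.Icc (0 : ℝ) 1) :
    dist (concatHalves f g s) (concatHalves f g t) ≤ 2 * |s - t| * L := by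
  wlog hst : s ≤ t generalizing s t
  · rw [dist_comm, abs_sub_comm]
    exact this ht hs (le_of_not_ge hst)
  obtain ⟨hs₀, hs₁⟩ := hs
  obtain ⟨ht₀, ht₁⟩ := ht
  unfold concatHalves
  split_ifs with hs₂ ht₂ ht₂
  · refine (hf _ ⟨by linarith, by linarith⟩ _ ⟨by linarith, by linarith⟩).trans_eq ?_
    rw [← mul_sub, abs_mul, abs_two, mul_assoc]
  · calc dist (f (2 * s)) (g (2 * t - 1))
        ≤ dist (f (2 * s)) (f 1) + dist (g 0) (g (2 * t - 1)) :=
          hfg ▸ dist_triangle _ _ _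
      _ ≤ |2 * s - 1| * L + |0 - (2 * t - 1)| * L :=
          add_le_add (hf _ ⟨by linarith, by linarith⟩ _ ⟨by linarith, le_rfl⟩)
            (hg _ ⟨le_rfl, by linarith⟩ _ ⟨by linarith, by linarith⟩)
      _ = 2 * |s - t| * L := by
          rw [abs_of_nonpos (by linarith), abs_of_nonpos (by linarith),
            abs_of_nonpos (by linarith)]
          ring
  · linarith
  · refine (hg _ ⟨by linarith, by linarith⟩ _ ⟨by linarith, by linarith⟩).trans_eq ?_
    rw [show 2 * s - 1 - (2 * t - 1) = 2 * (s - t) by ring, abs_mul, abs_two, mul_assoc]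

variable [MetricSpace X] (η : X → X → ℝ → X)

def geodesicSweep {α : Type*} (p q : α → X) {s : Set α} (hs : s.Finite) (hne : s.Nonempty)
    (u : ℝ) : NonemptyCompacts X :=
  ⟨⟨(fun a => η (p a) (q a) u) '' s, (hs.image _).isCompact⟩, hne.image _⟩

variable {η} {α : Type*} {p q : α → X} {s : Set α} (hs : s.Finite) (hne : s.Nonempty)

theorem coe_geodesicSweep (u : ℝ) :
    (geodesicSweep η p q hs hne u : Set X) = (fun a => η (p a) (q a) u) '' s :=
  rfl

theorem coe_geodesicSweep_zero (hη : ∀ a b, η a b 0 = a) :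
    (geodesicSweep η p q hs hne 0 : Set X) = p '' s := by
  simp only [coe_geodesicSweep, hη]

theorem coe_geodesicSweep_one (hη : ∀ a b, η a b 1 = b) :
    (geodesicSweep η p q hs hne 1 : Set X) = q '' s := by
  simp only [coe_geodesicSweep, hη]

theorem dist_geodesicSweep_le
    (hη : ∀ a b, ∀ u ∈ Set.Icc (0 : ℝ) 1, ∀ v ∈ Set.Icc (0 : ℝ) 1,
      dist (η a b u) (η a b v) = |u - v| * dist a b)
    {H : ℝ} (hH : 0 ≤ H) (hpq : ∀ a ∈ s, dist (p a) (q a) ≤ H)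
    {u v : ℝ} (hu : u ∈ Set.Icc (0 : ℝ) 1) (hv : v ∈ Set.Icc (0 : ℝ) 1) :
    dist (geodesicSweep η p q hs hne u) (geodesicSweep η p q hs hne v) ≤ |u - v| * H :=
  hausdorffDist_image_le_of_dist_le (by positivity) fun a ha =>
    (hη _ _ u hu v hv).trans_le (mul_le_mul_of_nonneg_left (hpq a ha) (abs_nonneg _))

end Metric

theorem stmt_18_general {X : Type*} [MetricSpace X]
    (hgeo : ∀ a b : X, ∃ η : ℝ → X, η 0 = a ∧ η 1 = b ∧
      ∀ s ∈ Set.Icc (0 : ℝ) 1, ∀ t ∈ Set.Icc (0 : ℝ) 1,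
        dist (η s) (η t) = |s - t| * dist a b)
    (n : ℕ)
    (x y : Set X) (hxne : x.Nonempty) (hxcard : x.encard ≤ n)
    (hyne : y.Nonempty) (hycard : y.encard ≤ n) :
    ∃ γ : ℝ → Set X, γ 0 = x ∧ γ 1 = y ∧
      (∀ t ∈ Set.Icc (0 : ℝ) 1, (γ t).Nonempty ∧ (γ t).encard ≤ n) ∧
      (∀ s ∈ Set.Icc (0 : ℝ) 1, ∀ t ∈ Set.Icc (0 : ℝ) 1,
        Metric.hausdorffDist (γ s) (γ t) ≤ 2 * |s - t| * Metric.hausdorffDist x y) := by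
  have hxfin : x.Finite := Set.finite_of_encard_le_coe hxcard
  have hyfin : y.Finite := Set.finite_of_encard_le_coe hycard
  have hcover := isEdgeCover_dist_le_hausdorffDist hxfin.isCompact hxne hyfin.isCompact hyne
  obtain ⟨μ, σ, hμ, hσ, himage⟩ :=
    hcover.exists_image_eq_image ((hxfin.prod hyfin).subset fun _ hp => hp.1)
  have hH : 0 ≤ hausdorffDist x y := hausdorffDist_nonneg
  have hμH : ∀ a ∈ x, dist a (μ a) ≤ hausdorffDist x y := fun a ha =>
    (hμ a ha).elim (fun h => by simpa [h] using hH) (·.2)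
  have hσH : ∀ b ∈ y, dist (σ b) b ≤ hausdorffDist x y := fun b hb =>
    (hσ b hb).elim (fun h => by simpa [h] using hH) (·.2)
  choose η hη0 hη1 hη using hgeo
  let P := geodesicSweep η id μ hxfin hxne
  let Q := geodesicSweep η σ id hyfin hyne
  have hPQ : P 1 = Q 0 := NonemptyCompacts.ext <| by
    rw [coe_geodesicSweep_one _ _ hη1, coe_geodesicSweep_zero _ _ hη0, himage]
  refine ⟨fun t => ((concatHalves P Q t : NonemptyCompacts X) : Set X), ?_, ?_,
    fun t _ => ⟨(concatHalves P Q t).nonempty, ?_⟩,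
    fun s hs t ht => dist_concatHalves_le ?_ ?_ hPQ hs ht⟩
  · simp [concatHalves, P, coe_geodesicSweep_zero _ _ hη0]
  · norm_num [concatHalves, Q, coe_geodesicSweep_one _ _ hη1]
  · dsimp only [concatHalves]
    split_ifs
    exacts [(Set.encard_image_le _ _).trans hxcard, (Set.encard_image_le _ _).trans hycard]
  · exact fun u hu v hv => dist_geodesicSweep_le _ _ hη hH hμH hu hv
  · exact fun u hu v hv => dist_geodesicSweep_le _ _ hη hH hσH hu hv

/-- Quasiconvexity of `X(n)`: if `X` is a geodesic space, then any two nonempty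
subsets of `X` with at most `n` elements are joined by a `2`-quasigeodesic in
`X(n)`. -/
theorem stmt_18 {X : Type*} [MetricSpace X]
    (hgeo : ∀ a b : X, ∃ η : ℝ → X, η 0 = a ∧ η 1 = b ∧
      ∀ s ∈ Set.Icc (0 : ℝ) 1, ∀ t ∈ Set.Icc (0 : ℝ) 1,
        dist (η s) (η t) = |s - t| * dist a b)
    (n : ℕ) (hn : 1 ≤ n)
    (x y : Set X) (hxne : x.Nonempty) (hxcard : x.encard ≤ n)
    (hyne : y.Nonempty) (hycard : y.encard ≤ n) :
    ∃ γ : ℝ → Set X, γ 0 = x ∧ γ 1 = y ∧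
      (∀ t ∈ Set.Icc (0 : ℝ) 1, (γ t).Nonempty ∧ (γ t).encard ≤ n) ∧
      (∀ s ∈ Set.Icc (0 : ℝ) 1, ∀ t ∈ Set.Icc (0 : ℝ) 1,
        Metric.hausdorffDist (γ s) (γ t) ≤ 2 * |s - t| * Metric.hausdorffDist x y) :=
  stmt_18_general hgeo n x y hxne hxcard hyne hycard
end

section
/- Let X be a geodesic metric space containing at least two points and let n ≥ 3. If λ > 0 is such that every two nonempty subsets x, y of X with at most n elements are joined by a λ-quasigeodesic in X(n) — that is, a path γ : [0,1] → X(n) with γ(0) = x, γ(1) = y and d_H(γ(s), γ(t)) ≤ λ·|s − t|·d_H(x, y) for all s, t ∈ [0,1] — then λ ≥ 2. Hence 2 is the smallest quasiconvexity constant of X(n) for n ≥ 3. -/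
/-! Suppose `λ < 2`. Sample a geodesic from `a` to `b` at `2n + 1` equally spaced points
`u 0, …, u (2n)`, consecutive ones at distance `δ`. The `n`-point sets `x` and `y` at positions
`0, 2, …, 2n-4, 2n-1` and `1, 3, …, 2n-5, 2n-2, 2n` are at Hausdorff distance `≤ δ`, so the
midpoint `Z = γ (1/2)` of a `λ`-quasigeodesic from `x` to `y` is within `λδ/2 < δ` of both.
The `n + 1` points at the even positions `0, 2, …, 2n` all lie in `x ∪ y`, hence each has a
point of `Z` at distance `< δ`; as they are `2δ` apart these points of `Z` are distinct,
so `Z` has more than `n` elements. -/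

open Set Metric

section

variable {X : Type*} [PseudoMetricSpace X]

theorem Set.encard_le_encard_of_forall_exists_dist_lt {ι : Type*} {I : Set ι} {p : ι → X}
    {Z : Set X} {r : ℝ} (hsep : I.Pairwise fun i j => 2 * r ≤ dist (p i) (p j))
    (hZ : ∀ i ∈ I, ∃ z ∈ Z, dist (p i) z < r) : I.encard ≤ Z.encard := by
  rcases I.eq_empty_or_nonempty with rfl | ⟨i₀, -⟩
  · simp
  have : Nonempty X := ⟨p i₀⟩
  choose! f hfZ hf using hZ
  refine encard_le_encard_of_injOn hfZ fun i hi j hj hij => ?_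
  by_contra hne
  have hj' := hf j hj
  rw [← hij] at hj'
  linarith [hsep hi hj hne, hf i hi, dist_triangle_right (p i) (p j) (f i)]

theorem Metric.exists_dist_lt_of_hausdorffDist_lt_of_isBounded {s t : Set X} {x : X} {r : ℝ}
    (hx : x ∈ s) (H : hausdorffDist s t < r) (hs : Bornology.IsBounded s)
    (ht : Bornology.IsBounded t) (htne : t.Nonempty) : ∃ y ∈ t, dist x y < r :=
  exists_dist_lt_of_hausdorffDist_lt hx H
    (hausdorffEDist_ne_top_of_nonempty_of_bounded ⟨x, hx⟩ htne hs ht)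

theorem dist_apply_natCast_div_natCast {η : ℝ → X} {D : ℝ}
    (hη : ∀ s ∈ Icc (0 : ℝ) 1, ∀ t ∈ Icc (0 : ℝ) 1, dist (η s) (η t) = |s - t| * D)
    {N i j : ℕ} (hi : i ≤ N) (hj : j ≤ N) :
    dist (η (i / N)) (η (j / N)) = |(i : ℝ) - j| * (D / N) := by
  have hmem {k : ℕ} (hk : k ≤ N) : (k / N : ℝ) ∈ Icc 0 1 :=
    ⟨by positivity, div_le_one_of_le₀ (by exact_mod_cast hk) N.cast_nonneg⟩
  rw [hη _ (hmem hi) _ (hmem hj), ← sub_div, abs_div, Nat.abs_cast]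
  ring

theorem one_le_abs_natCast_sub_natCast {i j : ℕ} (h : i ≠ j) : 1 ≤ |(i : ℝ) - j| := by
  exact_mod_cast Int.one_le_abs (sub_ne_zero.2 (Int.ofNat_inj.not.2 h))

namespace FiniteSubsetSpace

def leftPos (n k : ℕ) : ℕ := if k + 1 < n then 2 * k else 2 * k + 1

def rightPos (n k : ℕ) : ℕ := if k + 2 < n then 2 * k + 1 else 2 * k + 2

variable {n : ℕ}

theorem leftPos_le {k : ℕ} (hk : k < n) : leftPos n k ≤ 2 * n := by
  unfold leftPos; split_ifs <;> omega

theorem rightPos_le {k : ℕ} (hk : k < n) : rightPos n k ≤ 2 * n := by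
  unfold rightPos; split_ifs <;> omega

theorem exists_rightPos_adjacent (hn : 3 ≤ n) {k : ℕ} (hk : k < n) :
    ∃ k' < n, leftPos n k = rightPos n k' + 1 ∨ rightPos n k' = leftPos n k + 1 :=
  ⟨if k + 2 = n then k - 1 else k, by split_ifs <;> omega, by
    unfold leftPos rightPos; split_ifs <;> omega⟩

theorem exists_leftPos_adjacent {k : ℕ} (hk : k < n) :
    ∃ k' < n, leftPos n k' = rightPos n k + 1 ∨ rightPos n k = leftPos n k' + 1 :=
  ⟨if k + 2 < n then k else n - 1, by split_ifs <;> omega, by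
    unfold leftPos rightPos; split_ifs <;> omega⟩

theorem exists_leftPos_or_rightPos_eq_two_mul (hn : 2 ≤ n) {k : ℕ} (hk : k ≤ n) :
    (∃ k' < n, leftPos n k' = 2 * k) ∨ ∃ k' < n, rightPos n k' = 2 * k := by
  by_cases hkn : k + 1 < n
  · exact Or.inl ⟨k, by omega, if_pos hkn⟩
  · exact Or.inr ⟨k - 1, by omega, by unfold rightPos; split_ifs <;> omega⟩

variable {u : ℕ → X} {δ : ℝ}

theorem dist_eq_of_adjacent {N : ℕ}
    (hu : ∀ i ≤ N, ∀ j ≤ N, dist (u i) (u j) = |(i : ℝ) - j| * δ) {i j : ℕ} (hi : i ≤ N)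
    (hj : j ≤ N) (hij : i = j + 1 ∨ j = i + 1) : dist (u i) (u j) = δ := by
  rw [hu i hi j hj]
  rcases hij with rfl | rfl <;> simp

theorem hausdorffDist_image_leftPos_image_rightPos_le (hn : 3 ≤ n)
    (hu : ∀ i ≤ 2 * n, ∀ j ≤ 2 * n, dist (u i) (u j) = |(i : ℝ) - j| * δ) (hδ : 0 ≤ δ) :
    hausdorffDist (u ∘ leftPos n '' {k | k < n}) (u ∘ rightPos n '' {k | k < n}) ≤ δ := by
  refine hausdorffDist_le_of_mem_dist hδ ?_ ?_
  · rintro _ ⟨k, hk, rfl⟩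
    obtain ⟨k', hk', hadj⟩ := exists_rightPos_adjacent hn hk
    exact ⟨_, mem_image_of_mem _ hk',
      (dist_eq_of_adjacent hu (leftPos_le hk) (rightPos_le hk') hadj).le⟩
  · rintro _ ⟨k, hk, rfl⟩
    obtain ⟨k', hk', hadj⟩ := exists_leftPos_adjacent hk
    exact ⟨_, mem_image_of_mem _ hk',
      (dist_eq_of_adjacent hu (rightPos_le hk) (leftPos_le hk') hadj.symm).le⟩

theorem add_one_le_encard_of_hausdorffDist_lt (hn : 2 ≤ n)
    (hu : ∀ i ≤ 2 * n, ∀ j ≤ 2 * n, dist (u i) (u j) = |(i : ℝ) - j| * δ) {Z : Set X}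
    (hZ : Z.Finite) (hZne : Z.Nonempty)
    (hxZ : hausdorffDist (u ∘ leftPos n '' {k | k < n}) Z < δ)
    (hyZ : hausdorffDist (u ∘ rightPos n '' {k | k < n}) Z < δ) :
    ((n + 1 : ℕ) : ℕ∞) ≤ Z.encard := by
  have hδ : 0 ≤ δ := hausdorffDist_nonneg.trans hxZ.le
  rw [← Nat.encard_range]
  refine encard_le_encard_of_forall_exists_dist_lt (p := fun k => u (2 * k)) (r := δ) ?_ ?_
  · intro i hi j hj hij
    simp only [mem_ofPred_eq] at hi hj
    rw [hu _ (by omega) _ (by omega)]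
    push_cast
    rw [← mul_sub, abs_mul, abs_two]
    nlinarith [one_le_abs_natCast_sub_natCast hij]
  · intro k hk
    have hbdd (f : ℕ → ℕ) : Bornology.IsBounded (u ∘ f '' {k | k < n}) :=
      ((finite_lt_nat n).image _).isBounded
    rcases exists_leftPos_or_rightPos_eq_two_mul hn (Nat.lt_succ_iff.1 hk) with
      ⟨k', hk', hpos⟩ | ⟨k', hk', hpos⟩
    · exact exists_dist_lt_of_hausdorffDist_lt_of_isBounded
        (hpos ▸ mem_image_of_mem (u ∘ leftPos n) hk') hxZ (hbdd _) hZ.isBounded hZne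
    · exact exists_dist_lt_of_hausdorffDist_lt_of_isBounded
        (hpos ▸ mem_image_of_mem (u ∘ rightPos n) hk') hyZ (hbdd _) hZ.isBounded hZne

end FiniteSubsetSpace

end

open FiniteSubsetSpace in
/-- For a geodesic space `X` with at least two points and `n ≥ 3`, any constant
`λ > 0` such that every pair of points of `X(n)` is joined by a `λ`-quasigeodesic
in `X(n)` satisfies `λ ≥ 2`; i.e., `2` is the smallest quasiconvexity constant of
`X(n)`. -/
theorem stmt_19 {X : Type*} [MetricSpace X]
    (hgeo : ∀ a b : X, ∃ η : ℝ → X, η 0 = a ∧ η 1 = b ∧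
      ∀ s ∈ Set.Icc (0 : ℝ) 1, ∀ t ∈ Set.Icc (0 : ℝ) 1,
        dist (η s) (η t) = |s - t| * dist a b)
    (hX : ∃ a b : X, a ≠ b)
    (n : ℕ) (hn : 3 ≤ n) (l : ℝ) (hl : 0 < l)
    (hquasi : ∀ x y : Set X, x.Nonempty → x.encard ≤ n → y.Nonempty → y.encard ≤ n →
      ∃ γ : ℝ → Set X, γ 0 = x ∧ γ 1 = y ∧
        (∀ t ∈ Set.Icc (0 : ℝ) 1, (γ t).Nonempty ∧ (γ t).encard ≤ n) ∧
        (∀ s ∈ Set.Icc (0 : ℝ) 1, ∀ t ∈ Set.Icc (0 : ℝ) 1,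
          Metric.hausdorffDist (γ s) (γ t) ≤ l * |s - t| * Metric.hausdorffDist x y)) :
    2 ≤ l := by
  by_contra! hl2
  obtain ⟨a, b, hab⟩ := hX
  obtain ⟨η, -, -, hη⟩ := hgeo a b
  set u : ℕ → X := fun k => η (k / (2 * n : ℕ))
  set δ := dist a b / (2 * n : ℕ)
  have hδ : 0 < δ := div_pos (dist_pos.2 hab) (by positivity)
  have hu : ∀ i ≤ 2 * n, ∀ j ≤ 2 * n, dist (u i) (u j) = |(i : ℝ) - j| * δ :=
    fun i hi j hj => dist_apply_natCast_div_natCast hη hi hj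
  have hne (f : ℕ → ℕ) : (u ∘ f '' {k | k < n}).Nonempty :=
    ⟨_, mem_image_of_mem _ (by omega : 0 < n)⟩
  have hcard (f : ℕ → ℕ) : (u ∘ f '' {k | k < n}).encard ≤ n :=
    (encard_image_le _ _).trans (Nat.encard_range n).le
  obtain ⟨γ, hγ0, hγ1, hγ, hγl⟩ :=
    hquasi _ _ (hne _) (hcard (leftPos n)) (hne _) (hcard (rightPos n))
  have hxy := hausdorffDist_image_leftPos_image_rightPos_le hn hu hδ.le
  have hmid : (1 / 2 : ℝ) ∈ Icc (0 : ℝ) 1 := ⟨by norm_num, by norm_num⟩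
  have hclose {t : ℝ} (ht : t = 0 ∨ t = 1) : hausdorffDist (γ t) (γ (1 / 2)) < δ := by
    have ht' : t ∈ Icc (0 : ℝ) 1 := by rcases ht with rfl | rfl <;> norm_num
    have habs : |t - 1 / 2| = 1 / 2 := by rcases ht with rfl | rfl <;> norm_num
    calc hausdorffDist (γ t) (γ (1 / 2)) ≤ l * |t - 1 / 2| * hausdorffDist _ _ :=
          hγl t ht' _ hmid
      _ ≤ l * (1 / 2) * δ := by rw [habs]; gcongr
      _ < δ := by nlinarith
  obtain ⟨hZne, hZcard⟩ := hγ _ hmid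
  have hlt := (add_one_le_encard_of_hausdorffDist_lt (by omega) hu
    (finite_of_encard_le_coe hZcard) hZne (hγ0 ▸ hclose (.inl rfl))
    (hγ1 ▸ hclose (.inr rfl))).trans hZcard
  norm_cast at hlt
  omega
end
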